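/- arXiv:2310.14395 — 8 statements merged into one kernel-verified Lean document; each statement's English description precedes it below -/
import Mathlib

section
/- The number of strict local minima (under single spin flips) of the energy function of a restricted Boltzmann machine with V visible and H hidden binary neurons is at most min(2^V, 2^H). -/
open Finset

/-- Spin value of a boolean neuron. -/
noncomputable def spin (b : Bool) : ℝ := if b then 1 else -1

/-- Energy of a restricted Boltzmann machine on boolean (±1) configurations. -/
noncomputable def rbmEnergyB {V H : ℕ} (W : Fin V → Fin H → ℝ) (b : Fin V → ℝ)
    (c : Fin H → ℝ) (v : Fin V → Bool) (h : Fin H → Bool) : ℝ :=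
  -(∑ j, ∑ α, spin (v j) * W j α * spin (h α)) - ∑ j, b j * spin (v j)
    - ∑ α, c α * spin (h α)

/-- `(v,h)` is a strict local minimum: flipping any single (visible or hidden)
spin strictly increases the energy. -/
def IsStrictLocalMin {V H : ℕ} (W : Fin V → Fin H → ℝ) (b : Fin V → ℝ)
    (c : Fin H → ℝ) (p : (Fin V → Bool) × (Fin H → Bool)) : Prop :=
  (∀ j, rbmEnergyB W b c p.1 p.2 <
      rbmEnergyB W b c (Function.update p.1 j (!p.1 j)) p.2) ∧
  (∀ α, rbmEnergyB W b c p.1 p.2 <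
      rbmEnergyB W b c p.1 (Function.update p.2 α (!p.2 α)))

/-!
Flipping one spin changes the energy by twice the product of that spin with its local field,
and the local field of a spin depends only on the other layer. Hence at a strict local minimum
every spin has the sign of its field, so each layer determines the other and the minima inject
into the configurations of either layer.
-/

lemma spin_not (x : Bool) : spin (!x) = -spin x := by
  cases x <;> simp [spin]

lemma eq_decide_of_mul_spin_pos {A : ℝ} {x : Bool} (hx : 0 < A * spin x) :
    x = decide (0 < A) := by
  cases x <;> simp [spin] at hx ⊢ <;> linarith

lemma sum_mul_spin_update_not {ι : Type*} [Fintype ι] [DecidableEq ι] (A : ι → ℝ)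
    (s : ι → Bool) (i : ι) :
    ∑ k, A k * spin (Function.update s i (!s i) k)
      = ∑ k, A k * spin (s k) - 2 * (A i * spin (s i)) := by
  have hflip : ∀ k, A k * spin (Function.update s i (!s i) k)
      = A k * spin (s k) + if k = i then -2 * (A i * spin (s i)) else 0 := by
    intro k
    rcases eq_or_ne k i with rfl | hk
    · rw [Function.update_self, spin_not, if_pos rfl]
      ring
    · rw [Function.update_of_ne hk, if_neg hk, add_zero]
  simp only [hflip, Finset.sum_add_distrib, Finset.sum_ite_eq', Finset.mem_univ, if_true]
  ring

section Fields

variable {V H : ℕ} (W : Fin V → Fin H → ℝ) (b : Fin V → ℝ) (c : Fin H → ℝ)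

noncomputable def hiddenField (v : Fin V → Bool) (α : Fin H) : ℝ :=
  c α + ∑ j, spin (v j) * W j α

noncomputable def visibleField (h : Fin H → Bool) (j : Fin V) : ℝ :=
  b j + ∑ α, W j α * spin (h α)

lemma rbmEnergyB_eq_hiddenField (v : Fin V → Bool) (h : Fin H → Bool) :
    rbmEnergyB W b c v h
      = -(∑ α, hiddenField W c v α * spin (h α)) - ∑ j, b j * spin (v j) := by
  unfold rbmEnergyB hiddenField
  rw [Finset.sum_comm]
  simp only [add_mul, Finset.sum_mul, Finset.sum_add_distrib]
  ring

lemma rbmEnergyB_eq_visibleField (v : Fin V → Bool) (h : Fin H → Bool) :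
    rbmEnergyB W b c v h
      = -(∑ j, visibleField W b h j * spin (v j)) - ∑ α, c α * spin (h α) := by
  unfold rbmEnergyB visibleField
  simp only [add_mul, Finset.sum_mul, Finset.sum_add_distrib]
  simp only [mul_comm (W _ _ * _), mul_assoc]
  ring

lemma rbmEnergyB_update_hidden (v : Fin V → Bool) (h : Fin H → Bool) (α : Fin H) :
    rbmEnergyB W b c v (Function.update h α (!h α))
      = rbmEnergyB W b c v h + 2 * (hiddenField W c v α * spin (h α)) := by
  rw [rbmEnergyB_eq_hiddenField, rbmEnergyB_eq_hiddenField, sum_mul_spin_update_not]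
  ring

lemma rbmEnergyB_update_visible (v : Fin V → Bool) (h : Fin H → Bool) (j : Fin V) :
    rbmEnergyB W b c (Function.update v j (!v j)) h
      = rbmEnergyB W b c v h + 2 * (visibleField W b h j * spin (v j)) := by
  rw [rbmEnergyB_eq_visibleField, rbmEnergyB_eq_visibleField, sum_mul_spin_update_not]
  ring

end Fields

namespace IsStrictLocalMin

variable {V H : ℕ} {W : Fin V → Fin H → ℝ} {b : Fin V → ℝ} {c : Fin H → ℝ}
  {p : (Fin V → Bool) × (Fin H → Bool)}

lemma snd_eq (hp : IsStrictLocalMin W b c p) :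
    p.2 = fun α => decide (0 < hiddenField W c p.1 α) := by
  funext α
  apply eq_decide_of_mul_spin_pos
  have hflip := hp.2 α
  rw [rbmEnergyB_update_hidden] at hflip
  linarith

lemma fst_eq (hp : IsStrictLocalMin W b c p) :
    p.1 = fun j => decide (0 < visibleField W b p.2 j) := by
  funext j
  apply eq_decide_of_mul_spin_pos
  have hflip := hp.1 j
  rw [rbmEnergyB_update_visible] at hflip
  linarith

end IsStrictLocalMin

theorem rbm_strict_local_minima_card_le
    (V H : ℕ) (W : Fin V → Fin H → ℝ) (b : Fin V → ℝ) (c : Fin H → ℝ) :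
    Nat.card {p : (Fin V → Bool) × (Fin H → Bool) // IsStrictLocalMin W b c p}
      ≤ min (2 ^ V) (2 ^ H) := by
  have hfst : Function.Injective
      fun p : {p : (Fin V → Bool) × (Fin H → Bool) // IsStrictLocalMin W b c p} => p.1.1 := by
    rintro ⟨p, hp⟩ ⟨q, hq⟩ (hpq : p.1 = q.1)
    exact Subtype.ext (Prod.ext hpq (by rw [hp.snd_eq, hq.snd_eq, hpq]))
  have hsnd : Function.Injective
      fun p : {p : (Fin V → Bool) × (Fin H → Bool) // IsStrictLocalMin W b c p} => p.1.2 := by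
    rintro ⟨p, hp⟩ ⟨q, hq⟩ (hpq : p.2 = q.2)
    exact Subtype.ext (Prod.ext (by rw [hp.fst_eq, hq.fst_eq, hpq]) hpq)
  refine le_min ?_ ?_
  · simpa using Nat.card_le_card_of_injective _ hfst
  · simpa using Nat.card_le_card_of_injective _ hsnd
end

section
/- With the regularised RBM construction (weights W_{jα} = 2A v^α_j, visible biases zero, hidden biases c_α = 2A(λ_α - V) with 3/4 < λ_α < 5/4, A > 0, and the represented set Ω closed under negation), for any represented visible configuration v^η the unique hidden configuration minimizing E(v^η, h) is h_α = 2δ_{αη} - 1; i.e., the energy E(v^η,h) = -∑_α 2A(S_{αη} - V + λ_α) h_α where S_{αη} = v^α·v^η, and the effective field 2A(S_{αη} - V + λ_α) is negative for α ≠ η and positive for α = η. -/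
open Finset

/-- Energy of the regularised RBM with weights `W j α = 2 A v α j`, zero visible
biases and hidden biases `c α = 2 A (λ α - V)`. -/
noncomputable def raEnergy {V H : ℕ} (A : ℝ) (lam : Fin H → ℝ)
    (v : Fin H → Fin V → ℝ) (x : Fin V → ℝ) (h : Fin H → ℝ) : ℝ :=
  -(∑ j, ∑ α, x j * (2 * A * v α j) * h α)
    - ∑ α, (2 * A * (lam α - (V : ℝ))) * h α

/-- Overlap `S α η = v^α · v^η`. -/
noncomputable def raOverlap {V H : ℕ} (v : Fin H → Fin V → ℝ) (α η : Fin H) : ℝ :=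
  ∑ j, v α j * v η j

theorem regularised_pattern_hidden_minimizer
    (V H : ℕ) (A : ℝ) (hA : 0 < A) (lam : Fin H → ℝ)
    (hlam : ∀ α, 3 / 4 < lam α ∧ lam α < 5 / 4)
    (v : Fin H → Fin V → ℝ)
    (hpm : ∀ η j, v η j = 1 ∨ v η j = -1)
    (hdist : Function.Injective v)
    (hneg : ∀ η, ∃ η', ∀ j, v η' j = -(v η j))
    (η : Fin H) :
    -- energy formula
    (∀ h : Fin H → ℝ, raEnergy A lam v (v η) h =
        -∑ α, 2 * A * (raOverlap v α η - (V : ℝ) + lam α) * h α) ∧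
    -- effective field negative for α ≠ η, positive for α = η
    (∀ α, α ≠ η → 2 * A * (raOverlap v α η - (V : ℝ) + lam α) < 0) ∧
    (2 * A * (raOverlap v η η - (V : ℝ) + lam η) > 0) ∧
    -- unique minimizing hidden configuration h_α = 2δ_{αη} - 1
    (∀ h : Fin H → ℝ, (∀ α, h α = 1 ∨ h α = -1) →
      h ≠ (fun α => if α = η then (1 : ℝ) else -1) →
      raEnergy A lam v (v η) (fun α => if α = η then (1 : ℝ) else -1) <
        raEnergy A lam v (v η) h) := by
  -- energy formula
  have hE : ∀ h : Fin H → ℝ, raEnergy A lam v (v η) h =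
      -∑ α, 2 * A * (raOverlap v α η - (V : ℝ) + lam α) * h α := by
    intro h
    unfold raEnergy raOverlap
    rw [Finset.sum_comm]
    have : ∀ α : Fin H, (∑ j, v η j * (2 * A * v α j) * h α)
        = 2 * A * (∑ j, v α j * v η j) * h α := by
      intro α
      rw [Finset.mul_sum, Finset.sum_mul]
      exact Finset.sum_congr rfl fun j _ => by ring
    rw [Finset.sum_congr rfl fun α _ => this α, sub_eq_add_neg, ← neg_add,
      ← Finset.sum_add_distrib]
    congr 1
    exact Finset.sum_congr rfl fun α _ => by ring
  -- self overlap
  have hself : raOverlap v η η = (V : ℝ) := by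
    unfold raOverlap
    rw [Finset.sum_congr rfl (fun j _ => by
      rcases hpm η j with h1 | h1 <;> rw [h1] <;> norm_num)]
    simp
  -- cross overlap bound
  have hcross : ∀ α, α ≠ η → raOverlap v α η ≤ (V : ℝ) - 2 := by
    intro α hα
    have hne : v α ≠ v η := fun hc => hα (hdist hc)
    obtain ⟨j, hj⟩ := Function.ne_iff.mp hne
    have hterm : v α j * v η j = -1 := by
      rcases hpm α j with h1 | h1 <;> rcases hpm η j with h2 | h2
      · exact absurd (h1.trans h2.symm) hj
      · rw [h1, h2]; norm_num
      · rw [h1, h2]; norm_num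
      · exact absurd (h1.trans h2.symm) hj
    unfold raOverlap
    rw [← Finset.sum_erase_add _ _ (Finset.mem_univ j), hterm]
    have hrest : ∑ i ∈ Finset.univ.erase j, v α i * v η i ≤
        ∑ _i ∈ Finset.univ.erase j, (1 : ℝ) := by
      refine Finset.sum_le_sum fun i _ => ?_
      rcases hpm α i with h1 | h1 <;> rcases hpm η i with h2 | h2 <;>
        rw [h1, h2] <;> norm_num
    have hcard : ((Finset.univ.erase j).card : ℝ) ≤ (V : ℝ) - 1 := by
      rw [Finset.card_erase_of_mem (Finset.mem_univ j)]
      have hV : 1 ≤ V := by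
        have := Finset.card_pos.mpr ⟨j, Finset.mem_univ j⟩
        simp at this; omega
      simp only [Finset.card_univ, Fintype.card_fin]
      rw [Nat.cast_sub hV]
      simp
    calc (∑ i ∈ Finset.univ.erase j, v α i * v η i) + (-1)
        ≤ ((Finset.univ.erase j).card : ℝ) + (-1) := by
          simpa using add_le_add_right hrest (-1)
      _ ≤ (V : ℝ) - 1 + (-1) := by linarith
      _ = (V : ℝ) - 2 := by ring
  have hfieldneg : ∀ α, α ≠ η → 2 * A * (raOverlap v α η - (V : ℝ) + lam α) < 0 := by
    intro α hα
    have h1 := hcross α hα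
    have h2 := (hlam α).2
    have : raOverlap v α η - (V : ℝ) + lam α < 0 := by linarith
    nlinarith
  have hfieldpos : 2 * A * (raOverlap v η η - (V : ℝ) + lam η) > 0 := by
    have := (hlam η).1
    rw [hself]
    nlinarith
  refine ⟨hE, hfieldneg, hfieldpos, ?_⟩
  intro h hpmh hne
  set hstar : Fin H → ℝ := fun α => if α = η then (1 : ℝ) else -1 with hstar_def
  rw [hE, hE]
  rw [neg_lt_neg_iff, ← sub_pos, ← Finset.sum_sub_distrib]
  have hnn : ∀ α : Fin H, 0 ≤ 2 * A * (raOverlap v α η - (V : ℝ) + lam α) * hstar α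
      - 2 * A * (raOverlap v α η - (V : ℝ) + lam α) * h α := by
    intro α
    rcases eq_or_ne α η with rfl | hαη
    · have := hfieldpos
      have hh : h α ≤ 1 := by rcases hpmh α with h1 | h1 <;> rw [h1] <;> norm_num
      have : hstar α = 1 := by simp [hstar_def]
      rw [this]
      nlinarith
    · have hf := hfieldneg α hαη
      have hh : -1 ≤ h α := by rcases hpmh α with h1 | h1 <;> rw [h1] <;> norm_num
      have : hstar α = -1 := by simp [hstar_def, hαη]
      rw [this]
      nlinarith
  obtain ⟨α₀, hα₀⟩ := Function.ne_iff.mp hne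
  refine Finset.sum_pos' (fun α _ => hnn α) ⟨α₀, Finset.mem_univ α₀, ?_⟩
  rcases eq_or_ne α₀ η with rfl | hαη
  · have hh : h α₀ = -1 := by
      rcases hpmh α₀ with h1 | h1
      · exact absurd h1 (by simpa [hstar_def] using hα₀)
      · exact h1
    have : hstar α₀ = 1 := by simp [hstar_def]
    rw [this, hh]
    nlinarith [hfieldpos]
  · have hh : h α₀ = 1 := by
      rcases hpmh α₀ with h1 | h1
      · exact h1
      · exact absurd h1 (by simpa [hstar_def, hαη] using hα₀)
    have : hstar α₀ = -1 := by simp [hstar_def, hαη]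
    rw [this, hh]
    nlinarith [hfieldneg α₀ hαη]
end

section
/- In the regularised RBM construction, flipping a single hidden spin h_α in the pattern ξ^η = (v^η, h^η) with h^η_α = 2δ_{αη}-1 increases the energy by ΔE = 4A|S_{αη} - V + λ_α| > 3A. -/
/-!
Energy is linear in the hidden layer, so flipping `h α` changes it by `2 h α` times the
`α`-th hidden field `2A (S_{αη} - V + λ_α)`, i.e. by `4A (S_{αη} - V + λ_α) h α`. The sign of
the gap `S_{αη} - V + λ_α` agrees with `h α`: for `α = η` it is `λ_α > 3/4` since `S_{ηη} = V`,
and for `α ≠ η` it is at most `λ_α - 2 < -3/4` since distinct `±1` vectors differ in some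
coordinate.
-/

open Finset

lemma sum_mul_update {ι : Type*} [Fintype ι] [DecidableEq ι] (g h : ι → ℝ) (i : ι) (a : ℝ) :
    ∑ k, g k * Function.update h i a k = ∑ k, g k * h k + g i * (a - h i) := by
  simp only [Pi.update_eq_sub_add_single, Pi.add_apply, Pi.sub_apply, Pi.single_apply, mul_add,
    mul_sub, mul_ite, mul_zero, sum_add_distrib, sum_sub_distrib, sum_ite_eq', mem_univ, if_true]
  ring

lemma raEnergy_eq_neg_sum {V H : ℕ} (A : ℝ) (lam : Fin H → ℝ)
    (v : Fin H → Fin V → ℝ) (x : Fin V → ℝ) (h : Fin H → ℝ) :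
    raEnergy A lam v x h = -∑ α, 2 * A * (∑ j, x j * v α j + lam α - V) * h α := by
  rw [raEnergy, sum_comm, ← neg_add', ← sum_add_distrib]
  congr 1
  refine sum_congr rfl fun α _ => ?_
  have hfield : ∑ j, x j * (2 * A * v α j) * h α = 2 * A * (∑ j, x j * v α j) * h α := by
    rw [mul_sum, sum_mul]
    exact sum_congr rfl fun _ _ => by ring
  linear_combination hfield

lemma sum_mul_self_eq_card {ι : Type*} [Fintype ι] (x : ι → ℝ) (hx : ∀ j, x j = 1 ∨ x j = -1) :
    ∑ j, x j * x j = Fintype.card ι := by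
  have : ∀ j, x j * x j = 1 := fun j => by rcases hx j with h | h <;> simp [h]
  simp [this]

lemma sum_mul_le_card_sub_two {ι : Type*} [Fintype ι] {x y : ι → ℝ}
    (hx : ∀ j, x j = 1 ∨ x j = -1) (hy : ∀ j, y j = 1 ∨ y j = -1) (hxy : x ≠ y) :
    ∑ j, x j * y j ≤ Fintype.card ι - 2 := by
  obtain ⟨j₀, hj₀⟩ := Function.ne_iff.mp hxy
  have hle : ∀ j, 0 ≤ 1 - x j * y j := fun j => by
    rcases hx j with h | h <;> rcases hy j with h' | h' <;> simp [h, h']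
  have h₀ : 1 - x j₀ * y j₀ = 2 := by
    rcases hx j₀ with h | h <;> rcases hy j₀ with h' | h' <;> simp_all <;> norm_num
  have hsum := single_le_sum (fun j _ => hle j) (mem_univ j₀)
  simp only [h₀, sum_sub_distrib, sum_const, card_univ, nsmul_eq_mul, mul_one] at hsum
  linarith

lemma raEnergy_update_sub {V H : ℕ} (A : ℝ) (lam : Fin H → ℝ)
    (v : Fin H → Fin V → ℝ) (x : Fin V → ℝ) (h : Fin H → ℝ) (α : Fin H) (a : ℝ) :
    raEnergy A lam v x (Function.update h α a) - raEnergy A lam v x h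
      = -(2 * A * (∑ j, x j * v α j + lam α - V)) * (a - h α) := by
  rw [raEnergy_eq_neg_sum, raEnergy_eq_neg_sum, sum_mul_update]
  ring

lemma raOverlap_comm {V H : ℕ} (v : Fin H → Fin V → ℝ) (α η : Fin H) :
    raOverlap v α η = raOverlap v η α := by
  simp only [raOverlap, mul_comm]

theorem regularised_hidden_flip_energy_cost_general
    (V H : ℕ) (A : ℝ) (hA : 0 < A) (lam : Fin H → ℝ)
    (hlam : ∀ α, 3 / 4 < lam α ∧ lam α < 5 / 4)
    (v : Fin H → Fin V → ℝ)
    (hpm : ∀ η j, v η j = 1 ∨ v η j = -1)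
    (hdist : Function.Injective v)
    (η α : Fin H) :
    let hpat : Fin H → ℝ := fun β => if β = η then 1 else -1
    raEnergy A lam v (v η) (Function.update hpat α (-(hpat α)))
        - raEnergy A lam v (v η) hpat
      = 4 * A * |raOverlap v α η - (V : ℝ) + lam α| ∧
    4 * A * |raOverlap v α η - (V : ℝ) + lam α| > 3 * A := by
  intro hpat
  set gap := raOverlap v α η - V + lam α
  have hcost : raEnergy A lam v (v η) (Function.update hpat α (-(hpat α)))
      - raEnergy A lam v (v η) hpat = 4 * A * (gap * hpat α) := by
    have hS : ∑ j, v η j * v α j = raOverlap v α η := raOverlap_comm v η α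
    rw [raEnergy_update_sub, hS]
    simp only [gap]
    ring
  obtain ⟨hlo, hhi⟩ := hlam α
  have hgap : gap * hpat α = |gap| ∧ 3 / 4 < |gap| := by
    rcases eq_or_ne α η with rfl | hne
    · have hS : raOverlap v α α = V := by
        simpa [raOverlap] using sum_mul_self_eq_card (v α) (hpm α)
      have hpos : 0 < gap := by simp only [gap, hS]; linarith
      rw [show hpat α = 1 from if_pos rfl, mul_one, abs_of_pos hpos]
      exact ⟨rfl, by simp only [gap, hS]; linarith⟩
    · have hS : raOverlap v α η ≤ V - 2 := by
        simpa [raOverlap] using sum_mul_le_card_sub_two (hpm α) (hpm η) (hdist.ne hne)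
      have hneg : gap < 0 := by simp only [gap]; linarith
      rw [show hpat α = -1 from if_neg hne, mul_neg_one, abs_of_neg hneg]
      exact ⟨rfl, by simp only [gap]; linarith⟩
  exact ⟨by rw [hcost, hgap.1], by nlinarith [hgap.2]⟩

theorem regularised_hidden_flip_energy_cost
    (V H : ℕ) (A : ℝ) (hA : 0 < A) (lam : Fin H → ℝ)
    (hlam : ∀ α, 3 / 4 < lam α ∧ lam α < 5 / 4)
    (v : Fin H → Fin V → ℝ)
    (hpm : ∀ η j, v η j = 1 ∨ v η j = -1)
    (hdist : Function.Injective v)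
    (hneg : ∀ η, ∃ η', ∀ j, v η' j = -(v η j))
    (η α : Fin H) :
    let hpat : Fin H → ℝ := fun β => if β = η then 1 else -1
    raEnergy A lam v (v η) (Function.update hpat α (-(hpat α)))
        - raEnergy A lam v (v η) hpat
      = 4 * A * |raOverlap v α η - (V : ℝ) + lam α| ∧
    4 * A * |raOverlap v α η - (V : ℝ) + lam α| > 3 * A :=
  regularised_hidden_flip_energy_cost_general V H A hA lam hlam v hpm hdist η α
end

section
/- In the regularised RBM construction, for the hidden configuration h^η with h^η_α = 2δ_{αη} - 1, the energy as a function of the visible configuration is E(v, h^η) = -4A (v^η · v) + C_η where C_η = -∑_α c_α (2δ_{αη} - 1) does not depend on v; consequently v = v^η is the unique minimizer of E(·, h^η), and flipping any single visible spin of v^η increases the energy by exactly 8A. -/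
/-!
Negation permutes the (distinct) patterns, so `∑_α v^α = 0`, and the coupling term of the energy at
`h^η` collapses to `-2A ∑_j x_j (2 v^η_j - ∑_α v^α_j) = -4A (v^η · x)`. For `±1` spins
`a b = 1 - (a - b)² / 2`, hence `E(x, h^η) - E(v^η, h^η) = 2A ‖x - v^η‖²`: positive unless
`x = v^η`, and equal to `2A · 2² = 8A` after a single flip.
-/

open Finset

theorem Fintype.sum_eq_zero_of_injective_of_exists_neg {ι E : Type*} [Fintype ι]
    [AddCommGroup E] [IsAddTorsionFree E] {v : ι → E} (hv : Function.Injective v)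
    (hneg : ∀ i, ∃ i', v i' = -v i) : ∑ i, v i = 0 := by
  choose σ hσ using hneg
  have hσ_inj : Function.Injective σ := fun a b hab =>
    hv (neg_injective (by rw [← hσ a, ← hσ b, hab]))
  have hsum : ∑ i, v (σ i) = ∑ i, v i := hσ_inj.bijective_of_finite.sum_comp v
  simp only [hσ, sum_neg_distrib] at hsum
  exact self_eq_neg.mp hsum.symm

theorem Fintype.sum_mul_ite_one_neg_one {ι R : Type*} [Fintype ι] [DecidableEq ι] [CommRing R]
    (f : ι → R) (η : ι) :
    ∑ α, f α * (if α = η then 1 else -1) = 2 * f η - ∑ α, f α := by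
  have hpat : ∀ α, f α * (if α = η then 1 else -1) = 2 * (if α = η then f α else 0) - f α := by
    intro α
    split_ifs <;> ring
  simp only [hpat, sum_sub_distrib, ← mul_sum, sum_ite_eq']

theorem update_neg_apply_eq_one_or_neg_one {ι : Type*} [DecidableEq ι] {x : ι → ℝ}
    (hx : ∀ k, x k = 1 ∨ x k = -1) (j k : ι) :
    Function.update x j (-x j) k = 1 ∨ Function.update x j (-x j) k = -1 := by
  rcases eq_or_ne k j with rfl | hk
  · rcases hx k with h | h <;> simp [h]
  · simpa [Function.update_of_ne hk] using hx k

theorem sum_sq_sub_update_neg {ι R : Type*} [Fintype ι] [DecidableEq ι] [CommRing R]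
    (x : ι → R) (j : ι) : ∑ k, (x k - Function.update x j (-x j) k) ^ 2 = 4 * x j ^ 2 := by
  rw [sum_eq_single j (fun k _ hk => by simp [Function.update_of_ne hk]) (by simp)]
  simp only [Function.update_self]
  ring

theorem mul_eq_one_sub_sq_div_two {a b : ℝ} (ha : a = 1 ∨ a = -1) (hb : b = 1 ∨ b = -1) :
    a * b = 1 - (a - b) ^ 2 / 2 := by
  rcases ha with rfl | rfl <;> rcases hb with rfl | rfl <;> norm_num

theorem raEnergy_ite_eq {V H : ℕ} (A : ℝ) (lam : Fin H → ℝ) (v : Fin H → Fin V → ℝ)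
    (hsum : ∀ j, ∑ α, v α j = 0) (η : Fin H) (x : Fin V → ℝ) :
    raEnergy A lam v x (fun β => if β = η then 1 else -1) =
      -4 * A * (∑ j, v η j * x j)
        + -∑ α, (2 * A * (lam α - (V : ℝ))) * (if α = η then (1:ℝ) else -1) := by
  have hrow : ∀ j, ∑ α, x j * (2 * A * v α j) * (if α = η then 1 else -1) =
      4 * A * (v η j * x j) := by
    intro j
    have := Fintype.sum_mul_ite_one_neg_one (fun α => x j * (2 * A * v α j)) η
    simp only [← mul_sum, hsum j] at this
    rw [this]
    ring
  simp only [raEnergy, hrow, ← mul_sum]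
  ring

theorem raEnergy_ite_sub_eq {V H : ℕ} (A : ℝ) (lam : Fin H → ℝ) (v : Fin H → Fin V → ℝ)
    (hsum : ∀ j, ∑ α, v α j = 0) (η : Fin H) (hvη : ∀ j, v η j = 1 ∨ v η j = -1)
    {x : Fin V → ℝ} (hx : ∀ j, x j = 1 ∨ x j = -1) :
    raEnergy A lam v x (fun β => if β = η then 1 else -1)
      - raEnergy A lam v (v η) (fun β => if β = η then 1 else -1) =
        2 * A * ∑ j, (v η j - x j) ^ 2 := by
  have hdot : ∑ j, v η j * v η j - ∑ j, v η j * x j = (∑ j, (v η j - x j) ^ 2) / 2 := by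
    rw [← sum_sub_distrib, sum_div]
    refine sum_congr rfl fun j _ => ?_
    rw [mul_eq_one_sub_sq_div_two (hvη j) (hx j), mul_eq_one_sub_sq_div_two (hvη j) (hvη j)]
    ring
  rw [raEnergy_ite_eq A lam v hsum, raEnergy_ite_eq A lam v hsum]
  linear_combination 4 * A * hdot

theorem regularised_visible_minimizer
    (V H : ℕ) (A : ℝ) (hA : 0 < A) (lam : Fin H → ℝ)
    (v : Fin H → Fin V → ℝ)
    (hpm : ∀ η j, v η j = 1 ∨ v η j = -1)
    (hdist : Function.Injective v)
    (hneg : ∀ η, ∃ η', ∀ j, v η' j = -(v η j))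
    (η : Fin H) :
    let hpat : Fin H → ℝ := fun β => if β = η then 1 else -1
    let Cη : ℝ := -∑ α, (2 * A * (lam α - (V : ℝ))) * (if α = η then (1:ℝ) else -1)
    -- energy as a function of the visible configuration
    (∀ x : Fin V → ℝ, (∀ j, x j = 1 ∨ x j = -1) →
      raEnergy A lam v x hpat = -4 * A * (∑ j, v η j * x j) + Cη) ∧
    -- v^η is the unique minimizer among ±1 visible configurations
    (∀ x : Fin V → ℝ, (∀ j, x j = 1 ∨ x j = -1) → x ≠ v η →
      raEnergy A lam v (v η) hpat < raEnergy A lam v x hpat) ∧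
    -- flipping any single visible spin of v^η costs exactly 8A
    (∀ j : Fin V,
      raEnergy A lam v (Function.update (v η) j (-(v η j))) hpat
        = raEnergy A lam v (v η) hpat + 8 * A) := by
  intro hpat Cη
  have hsum : ∀ j, ∑ α, v α j = 0 := fun j => by
    rw [← Finset.sum_apply, Fintype.sum_eq_zero_of_injective_of_exists_neg hdist
      fun α => (hneg α).imp fun _ h => funext h, Pi.zero_apply]
  have hgap : ∀ {x : Fin V → ℝ}, (∀ j, x j = 1 ∨ x j = -1) →
      raEnergy A lam v x hpat - raEnergy A lam v (v η) hpat = 2 * A * ∑ j, (v η j - x j) ^ 2 :=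
    raEnergy_ite_sub_eq A lam v hsum η (hpm η)
  refine ⟨fun x _ => raEnergy_ite_eq A lam v hsum η x, fun x hx hne => ?_, fun j => ?_⟩
  · obtain ⟨j, hj⟩ := Function.ne_iff.mp hne
    have hpos : 0 < ∑ j, (v η j - x j) ^ 2 := sum_pos' (fun _ _ => sq_nonneg _)
      ⟨j, mem_univ _, sq_pos_of_ne_zero (sub_ne_zero.mpr (Ne.symm hj))⟩
    rw [← sub_pos, hgap hx]
    exact mul_pos (by positivity) hpos
  · rw [← sub_eq_iff_eq_add', hgap (update_neg_apply_eq_one_or_neg_one (hpm η) j),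
      sum_sq_sub_update_neg]
    rcases hpm η j with h | h <;> rw [h] <;> ring
end

section
/- In the regularised RBM construction, for any visible configuration v' not in the represented set Ω, all effective fields on hidden neurons 2A(v'·v^α - V + λ_α) are negative, and hence the unique hidden configuration minimizing E(v', h) is h = -e (all hidden spins equal to -1). -/
open Finset

/-! Outside `Ω`, a spin configuration disagrees with each pattern `v^α` in at least one spin, so
its overlap with `v^α` is at most `V - 2`; since `λ_α < 5/4 < 2`, every effective field
`2A (v' · v^α - V + λ_α)` is negative. The energy is `-∑_α field_α h_α`, which over `h ∈ {±1}^H`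
is then strictly minimised by switching every hidden spin off. -/

noncomputable def raField {V H : ℕ} (A : ℝ) (lam : Fin H → ℝ)
    (v : Fin H → Fin V → ℝ) (x : Fin V → ℝ) (α : Fin H) : ℝ :=
  2 * A * ((∑ j, x j * v α j) - (V : ℝ) + lam α)

lemma raEnergy_eq_neg_sum_raField_mul {V H : ℕ} (A : ℝ) (lam : Fin H → ℝ)
    (v : Fin H → Fin V → ℝ) (x : Fin V → ℝ) (h : Fin H → ℝ) :
    raEnergy A lam v x h = -∑ α, raField A lam v x α * h α := by
  unfold raEnergy raField
  rw [Finset.sum_comm, neg_sub_left, ← Finset.sum_add_distrib]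
  congr 1
  refine Finset.sum_congr rfl fun α _ => ?_
  have hpull : ∑ j, x j * (2 * A * v α j) * h α = 2 * A * (∑ j, x j * v α j) * h α := by
    rw [Finset.mul_sum, Finset.sum_mul]
    exact Finset.sum_congr rfl fun j _ => by ring
  rw [hpull]
  ring

section SpinOverlap

variable {ι : Type*} [Fintype ι] {x y : ι → ℝ}

lemma one_sub_mul_nonneg_of_pm_one {a b : ℝ} (ha : a = 1 ∨ a = -1) (hb : b = 1 ∨ b = -1) :
    0 ≤ 1 - a * b := by
  rcases ha with rfl | rfl <;> rcases hb with rfl | rfl <;> norm_num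

lemma one_sub_mul_eq_two_of_pm_one_of_ne {a b : ℝ} (ha : a = 1 ∨ a = -1)
    (hb : b = 1 ∨ b = -1) (hab : a ≠ b) : 1 - a * b = 2 := by
  rcases ha with rfl | rfl <;> rcases hb with rfl | rfl <;> norm_num at *

lemma sum_mul_le_card_sub_two_of_pm_one_of_ne (hx : ∀ i, x i = 1 ∨ x i = -1)
    (hy : ∀ i, y i = 1 ∨ y i = -1) (hxy : x ≠ y) :
    ∑ i, x i * y i ≤ Fintype.card ι - 2 := by
  obtain ⟨i₀, hi₀⟩ := Function.ne_iff.mp hxy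
  have hmismatch : 2 ≤ ∑ i, (1 - x i * y i) := by
    rw [← one_sub_mul_eq_two_of_pm_one_of_ne (hx i₀) (hy i₀) hi₀]
    exact Finset.single_le_sum (fun i _ => one_sub_mul_nonneg_of_pm_one (hx i) (hy i))
      (Finset.mem_univ i₀)
  rw [Finset.sum_sub_distrib, Finset.sum_const, Finset.card_univ, nsmul_one] at hmismatch
  linarith

end SpinOverlap

lemma sum_mul_lt_sum_mul_neg_one {ι : Type*} [Fintype ι] {b h : ι → ℝ} (hb : ∀ i, b i < 0)
    (hh : ∀ i, h i = 1 ∨ h i = -1) (hne : h ≠ fun _ => -1) :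
    ∑ i, b i * h i < ∑ i, b i * -1 := by
  obtain ⟨i₀, hi₀⟩ := Function.ne_iff.mp hne
  have hle : ∀ i, b i * h i ≤ b i * -1 := fun i => by
    rcases hh i with hi | hi <;> simp only [hi] <;> linarith [hb i]
  refine Finset.sum_lt_sum (fun i _ => hle i) ⟨i₀, Finset.mem_univ _, ?_⟩
  rw [(hh i₀).resolve_right hi₀]
  linarith [hb i₀]

theorem regularised_nonrepresented_fields_negative_general
    (V H : ℕ) (A : ℝ) (hA : 0 < A) (lam : Fin H → ℝ)
    (hlam : ∀ α, 3 / 4 < lam α ∧ lam α < 5 / 4)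
    (v : Fin H → Fin V → ℝ)
    (hpm : ∀ η j, v η j = 1 ∨ v η j = -1)
    (v' : Fin V → ℝ)
    (hv'pm : ∀ j, v' j = 1 ∨ v' j = -1)
    (hv' : ∀ η, v' ≠ v η) :
    -- all effective fields on hidden neurons are negative
    (∀ α, 2 * A * ((∑ j, v' j * v α j) - (V : ℝ) + lam α) < 0) ∧
    -- hence the all-(-1) hidden configuration is the unique minimizer
    (∀ h : Fin H → ℝ, (∀ α, h α = 1 ∨ h α = -1) →
      h ≠ (fun _ => (-1 : ℝ)) →
      raEnergy A lam v v' (fun _ => (-1 : ℝ)) < raEnergy A lam v v' h) := by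
  have hfield : ∀ α, raField A lam v v' α < 0 := fun α => by
    have hoverlap := sum_mul_le_card_sub_two_of_pm_one_of_ne hv'pm (hpm α) (hv' α)
    rw [Fintype.card_fin] at hoverlap
    exact mul_neg_of_pos_of_neg (by positivity) (by linarith [(hlam α).2])
  refine ⟨hfield, fun h hh hne => ?_⟩
  rw [raEnergy_eq_neg_sum_raField_mul, raEnergy_eq_neg_sum_raField_mul, neg_lt_neg_iff]
  exact sum_mul_lt_sum_mul_neg_one hfield hh hne

theorem regularised_nonrepresented_fields_negative
    (V H : ℕ) (A : ℝ) (hA : 0 < A) (lam : Fin H → ℝ)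
    (hlam : ∀ α, 3 / 4 < lam α ∧ lam α < 5 / 4)
    (v : Fin H → Fin V → ℝ)
    (hpm : ∀ η j, v η j = 1 ∨ v η j = -1)
    (hdist : Function.Injective v)
    (hneg : ∀ η, ∃ η', ∀ j, v η' j = -(v η j))
    (v' : Fin V → ℝ)
    (hv'pm : ∀ j, v' j = 1 ∨ v' j = -1)
    (hv' : ∀ η, v' ≠ v η) :
    -- all effective fields on hidden neurons are negative
    (∀ α, 2 * A * ((∑ j, v' j * v α j) - (V : ℝ) + lam α) < 0) ∧
    -- hence the all-(-1) hidden configuration is the unique minimizer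
    (∀ h : Fin H → ℝ, (∀ α, h α = 1 ∨ h α = -1) →
      h ≠ (fun _ => (-1 : ℝ)) →
      raEnergy A lam v v' (fun _ => (-1 : ℝ)) < raEnergy A lam v v' h) :=
  regularised_nonrepresented_fields_negative_general V H A hA lam hlam v hpm v' hv'pm hv'
end

section
/- In the regularised RBM construction, for any non-represented visible configuration v' ∉ Ω, the minimum of E(v', h) over hidden configurations h ∈ {-1,1}^H equals E_0 = -2A ∑_α (V - λ_α), attained at h = -e. -/
/-!
Writing `S α = v' ⬝ᵥ v α`, closure of `Ω` under negation together with distinctness gives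
`∑ α, v α = 0`, hence `∑ α, S α = 0`, and the energy becomes
`E(v', h) = E₀ + 2A ∑ α, (1 + h α) (V - λ α - S α)`.
Since `v' ∉ Ω`, every `S α ≤ V - 2`, so each bracket exceeds `2 - λ α > 0`; as `1 + h α ≥ 0`,
the energy is at least `E₀`, and it equals `E₀` at `h = -e`.
-/

open Finset

open Matrix

theorem Fintype.sum_eq_zero_of_injective_of_neg_mem_range {ι M : Type*} [Fintype ι]
    [AddCommGroup M] [IsAddTorsionFree M] {v : ι → M} (hv : Function.Injective v)
    (hneg : ∀ i, -v i ∈ Set.range v) :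
    ∑ i, v i = 0 := by
  choose σ hσ using hneg
  have hσσ : Function.Involutive σ := fun i => hv (by rw [hσ, hσ, neg_neg])
  rw [← self_eq_neg]
  calc ∑ i, v i = ∑ i, v (σ i) := (Equiv.sum_comp hσσ.toPerm v).symm
    _ = -∑ i, v i := by simp only [hσ, Finset.sum_neg_distrib]

theorem dotProduct_le_card_sub_two_of_ne {ι : Type*} [Fintype ι] {x y : ι → ℝ}
    (hx : ∀ j, x j = 1 ∨ x j = -1) (hy : ∀ j, y j = 1 ∨ y j = -1) (hne : x ≠ y) :
    x ⬝ᵥ y ≤ Fintype.card ι - 2 := by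
  obtain ⟨j₀, hj₀⟩ := Function.ne_iff.mp hne
  have hle : ∀ j, 0 ≤ 1 - x j * y j := fun j => by
    rcases hx j with h | h <;> rcases hy j with h' | h' <;> norm_num [h, h']
  have hj₀ : 1 - x j₀ * y j₀ = 2 := by
    rcases hx j₀ with h | h <;> rcases hy j₀ with h' | h' <;> simp [h, h'] at hj₀ ⊢ <;> norm_num
  have hsum : 2 ≤ ∑ j, (1 - x j * y j) :=
    hj₀ ▸ Finset.single_le_sum (fun j _ => hle j) (Finset.mem_univ j₀)
  simp only [Finset.sum_sub_distrib, Finset.sum_const, Finset.card_univ, nsmul_one] at hsum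
  rw [dotProduct]
  linarith

theorem raEnergy_eq_sum_mul_dotProduct {V H : ℕ} (A : ℝ) (lam : Fin H → ℝ)
    (v : Fin H → Fin V → ℝ) (x : Fin V → ℝ) (h : Fin H → ℝ) :
    raEnergy A lam v x h = -2 * A * ∑ α, h α * (x ⬝ᵥ v α + lam α - V) := by
  simp only [raEnergy, dotProduct, Finset.mul_sum]
  rw [Finset.sum_comm, ← Finset.sum_neg_distrib, ← Finset.sum_sub_distrib]
  refine Finset.sum_congr rfl fun α _ => ?_
  have hα : ∑ j, x j * (2 * A * v α j) * h α = 2 * A * h α * ∑ j, x j * v α j := by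
    rw [Finset.mul_sum]
    exact Finset.sum_congr rfl fun j _ => by ring
  rw [hα]
  ring

theorem raEnergy_eq_of_sum_dotProduct_eq_zero {V H : ℕ} (A : ℝ) (lam : Fin H → ℝ)
    (v : Fin H → Fin V → ℝ) (x : Fin V → ℝ) (h : Fin H → ℝ) (hx : ∑ α, x ⬝ᵥ v α = 0) :
    raEnergy A lam v x h =
      -2 * A * ∑ α, ((V : ℝ) - lam α) + 2 * A * ∑ α, (1 + h α) * (V - lam α - x ⬝ᵥ v α) := by
  calc raEnergy A lam v x h = -2 * A * ∑ α, h α * (x ⬝ᵥ v α + lam α - V) :=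
        raEnergy_eq_sum_mul_dotProduct A lam v x h
    _ = -2 * A * ∑ α, ((V : ℝ) - lam α)
          + 2 * A * ∑ α, (1 + h α) * (V - lam α - x ⬝ᵥ v α) + 2 * A * ∑ α, x ⬝ᵥ v α := by
        simp only [Finset.mul_sum, ← Finset.sum_add_distrib]
        exact Finset.sum_congr rfl fun α _ => by ring
    _ = _ := by rw [hx, mul_zero, add_zero]

theorem regularised_nonrepresented_min_energy
    (V H : ℕ) (A : ℝ) (hA : 0 < A) (lam : Fin H → ℝ)
    (hlam : ∀ α, 3 / 4 < lam α ∧ lam α < 5 / 4)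
    (v : Fin H → Fin V → ℝ)
    (hpm : ∀ η j, v η j = 1 ∨ v η j = -1)
    (hdist : Function.Injective v)
    (hneg : ∀ η, ∃ η', ∀ j, v η' j = -(v η j))
    (v' : Fin V → ℝ)
    (hv'pm : ∀ j, v' j = 1 ∨ v' j = -1)
    (hv' : ∀ η, v' ≠ v η) :
    let E0 : ℝ := -2 * A * ∑ α, ((V : ℝ) - lam α)
    -- E0 is a lower bound over all ±1 hidden configurations ...
    (∀ h : Fin H → ℝ, (∀ α, h α = 1 ∨ h α = -1) →
      E0 ≤ raEnergy A lam v v' h) ∧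
    -- ... attained at the all-(-1) hidden configuration
    raEnergy A lam v v' (fun _ => (-1 : ℝ)) = E0 := by
  intro E0
  have hsum : ∑ α, v' ⬝ᵥ v α = 0 := by
    have hv : ∑ α, v α = 0 := Fintype.sum_eq_zero_of_injective_of_neg_mem_range hdist
      fun η => let ⟨η', hη'⟩ := hneg η; ⟨η', funext hη'⟩
    rw [← dotProduct_sum, hv, dotProduct_zero]
  have hgap : ∀ α, 0 < (V : ℝ) - lam α - v' ⬝ᵥ v α := fun α => by
    have hS := dotProduct_le_card_sub_two_of_ne hv'pm (hpm α) (hv' α)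
    rw [Fintype.card_fin] at hS
    linarith [(hlam α).2]
  refine ⟨fun h hh => ?_, ?_⟩
  · rw [raEnergy_eq_of_sum_dotProduct_eq_zero A lam v v' h hsum, le_add_iff_nonneg_right]
    refine mul_nonneg (by positivity) (Finset.sum_nonneg fun α _ => mul_nonneg ?_ (hgap α).le)
    rcases hh α with h1 | h1 <;> norm_num [h1]
  · simp [raEnergy_eq_of_sum_dotProduct_eq_zero A lam v v' _ hsum, E0]
end

section
/- In the regularised RBM construction, the energy of pattern ξ^η equals 𝓔_η = -4Aλ_η + E_0 where E_0 = -2A ∑_α (V - λ_α). -/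
open Finset

/-! With `h_α = 2 δ_{αη} - 1`, the energy of the pattern `ξ^η` is
`-2 F_η + ∑_α F_α` where `F_α = 2A (S_{αη} + λ_α - V)`. Since the patterns are `±1`-vectors,
`S_{ηη} = V`, so `F_η = 2A λ_η`; and negation permutes the patterns, so the overlaps
`S_{αη}` cancel in pairs and `∑_α F_α = -2A ∑_α (V - λ_α)`. -/

theorem sum_eq_zero_of_bijective_of_comp_eq_neg {ι G : Type*} [Fintype ι] [AddCommGroup G]
    [IsAddTorsionFree G] {σ : ι → ι} (hσ : Function.Bijective σ) {f : ι → G}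
    (hf : ∀ i, f (σ i) = -f i) : ∑ i, f i = 0 :=
  self_eq_neg.mp <| by simpa only [hf, sum_neg_distrib] using (hσ.sum_comp f).symm

theorem sum_mul_ite_eq_one_neg_one {ι R : Type*} [Fintype ι] [DecidableEq ι] [CommRing R]
    (F : ι → R) (η : ι) :
    ∑ α, F α * (if α = η then 1 else -1) = 2 * F η - ∑ α, F α := by
  have hpoint : ∀ α, F α * (if α = η then 1 else -1) = 2 * (if α = η then F α else 0) - F α := by
    intro α
    split_ifs <;> ring
  simp only [hpoint, sum_sub_distrib, ← mul_sum, sum_ite_eq', mem_univ, if_true]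

section Overlap

variable {V H : ℕ} (v : Fin H → Fin V → ℝ)

theorem raOverlap_self_of_sign {η : Fin H} (hpm : ∀ j, v η j = 1 ∨ v η j = -1) :
    raOverlap v η η = V := by
  have hsq : ∀ j, v η j * v η j = 1 := fun j ↦ by
    rcases hpm j with h | h <;> rw [h] <;> norm_num
  simp [raOverlap, hsq]

theorem raOverlap_of_eq_neg {α α' : Fin H} (hα : ∀ j, v α' j = -v α j) (η : Fin H) :
    raOverlap v α' η = -raOverlap v α η := by
  simp only [raOverlap, hα, neg_mul, sum_neg_distrib]

theorem sum_raOverlap_eq_zero (hdist : Function.Injective v)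
    (hneg : ∀ η, ∃ η', ∀ j, v η' j = -(v η j)) (η : Fin H) :
    ∑ α, raOverlap v α η = 0 := by
  choose n hn using hneg
  have hinv : Function.Involutive n := fun α ↦ hdist <| funext fun j ↦ by simp [hn]
  exact sum_eq_zero_of_bijective_of_comp_eq_neg hinv.bijective
    fun α ↦ raOverlap_of_eq_neg v (hn α) η

end Overlap

theorem raEnergy_eq_sum_raOverlap {V H : ℕ} (A : ℝ) (lam : Fin H → ℝ)
    (v : Fin H → Fin V → ℝ) (η : Fin H) (h : Fin H → ℝ) :
    raEnergy A lam v (v η) h = -∑ α, 2 * A * (raOverlap v α η + lam α - V) * h α := by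
  rw [raEnergy, sum_comm, ← neg_add', ← sum_add_distrib]
  congr 1
  refine sum_congr rfl fun α _ ↦ ?_
  have hweights : ∑ j, v η j * (2 * A * v α j) * h α = 2 * A * raOverlap v α η * h α := by
    rw [raOverlap, mul_sum, sum_mul]
    exact sum_congr rfl fun j _ ↦ by ring
  rw [hweights]
  ring

theorem regularised_pattern_energy_general
    (V H : ℕ) (A : ℝ) (lam : Fin H → ℝ)
    (v : Fin H → Fin V → ℝ)
    (hpm : ∀ η j, v η j = 1 ∨ v η j = -1)
    (hdist : Function.Injective v)
    (hneg : ∀ η, ∃ η', ∀ j, v η' j = -(v η j))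
    (η : Fin H) :
    raEnergy A lam v (v η) (fun β => if β = η then (1 : ℝ) else -1)
      = -4 * A * lam η + (-2 * A * ∑ α, ((V : ℝ) - lam α)) := by
  rw [raEnergy_eq_sum_raOverlap, sum_mul_ite_eq_one_neg_one, raOverlap_self_of_sign v (hpm η)]
  have hsum : ∑ α, 2 * A * (raOverlap v α η + lam α - V)
      = 2 * A * ∑ α, raOverlap v α η - 2 * A * ∑ α, ((V : ℝ) - lam α) := by
    rw [← mul_sum, ← mul_sub, ← sum_sub_distrib]
    congr 1
    exact sum_congr rfl fun α _ ↦ by ring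
  rw [hsum, sum_raOverlap_eq_zero v hdist hneg η]
  ring

theorem regularised_pattern_energy
    (V H : ℕ) (A : ℝ) (hA : 0 < A) (lam : Fin H → ℝ)
    (v : Fin H → Fin V → ℝ)
    (hpm : ∀ η j, v η j = 1 ∨ v η j = -1)
    (hdist : Function.Injective v)
    (hneg : ∀ η, ∃ η', ∀ j, v η' j = -(v η j))
    (η : Fin H) :
    raEnergy A lam v (v η) (fun β => if β = η then (1 : ℝ) else -1)
      = -4 * A * lam η + (-2 * A * ∑ α, ((V : ℝ) - lam α)) :=
  regularised_pattern_energy_general V H A lam v hpm hdist hneg η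
end

section
/- In the regularised RBM construction, every configuration (v,h) that is not a pattern has energy more than A greater than the energy of every pattern, i.e., the minimum of E over non-pattern configurations exceeds the maximum of E over patterns by more than A. -/
open Finset

/-- Two distinct ±1-vectors have overlap at most `V - 2`. -/
lemma pm_overlap_le {V : ℕ} (y z : Fin V → ℝ)
    (hy : ∀ j, y j = 1 ∨ y j = -1) (hz : ∀ j, z j = 1 ∨ z j = -1)
    (hne : y ≠ z) : ∑ j, y j * z j ≤ (V : ℝ) - 2 := by
  classical
  obtain ⟨j0, hj0⟩ : ∃ j0, y j0 ≠ z j0 := by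
    by_contra hcon
    push_neg at hcon
    exact hne (funext hcon)
  have hle : ∀ j, y j * z j ≤ if j = j0 then (-1 : ℝ) else 1 := by
    intro j
    by_cases hj : j = j0
    · subst hj
      simp only [if_pos rfl]
      rcases hy j with h1 | h1 <;> rcases hz j with h2 | h2 <;>
        simp [h1, h2] at hj0 ⊢
    · simp only [if_neg hj]
      rcases hy j with h1 | h1 <;> rcases hz j with h2 | h2 <;> simp [h1, h2]
  calc ∑ j, y j * z j ≤ ∑ j, (if j = j0 then (-1 : ℝ) else 1) :=
        Finset.sum_le_sum fun j _ => hle j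
    _ = (V : ℝ) - 2 := by
        have h2 : ∀ j : Fin V, (if j = j0 then (-1 : ℝ) else 1)
            = (if j = j0 then (-2 : ℝ) else 0) + 1 := by
          intro j; by_cases hj : j = j0 <;> simp [hj] <;> norm_num
        rw [Finset.sum_congr rfl fun j _ => h2 j, Finset.sum_add_distrib,
          Finset.sum_ite_eq' univ j0 (fun _ => (-2 : ℝ))]
        simp
        ring

lemma pm_overlap_self {V : ℕ} (y : Fin V → ℝ)
    (hy : ∀ j, y j = 1 ∨ y j = -1) : ∑ j, y j * y j = (V : ℝ) := by
  have h1 : ∀ j, y j * y j = 1 := by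
    intro j; rcases hy j with h | h <;> simp [h]
  simp [h1]

theorem regularised_pattern_energy_gap
    (V H : ℕ) (A : ℝ) (hA : 0 < A) (lam : Fin H → ℝ)
    (hlam : ∀ α, 3 / 4 < lam α ∧ lam α < 5 / 4)
    (v : Fin H → Fin V → ℝ)
    (hpm : ∀ η j, v η j = 1 ∨ v η j = -1)
    (hdist : Function.Injective v)
    (hneg : ∀ η, ∃ η', ∀ j, v η' j = -(v η j))
    (x : Fin V → ℝ) (h : Fin H → ℝ)
    (hx : ∀ j, x j = 1 ∨ x j = -1) (hh : ∀ α, h α = 1 ∨ h α = -1)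
    (hnotpat : ¬∃ η, x = v η ∧ h = (fun γ => if γ = η then (1 : ℝ) else -1)) :
    ∀ η : Fin H,
      raEnergy A lam v x h >
        raEnergy A lam v (v η) (fun γ => if γ = η then (1 : ℝ) else -1)
          + A := by
  classical
  intro η
  -- the involution η ↦ -η
  set σ : Fin H → Fin H := fun γ => (hneg γ).choose with hσdef
  have hσ : ∀ γ j, v (σ γ) j = -(v γ j) := fun γ => (hneg γ).choose_spec
  -- column sums of v vanish
  have hcol : ∀ j : Fin V, ∑ α, v α j = 0 := by
    intro j
    refine Finset.sum_ninvolution σ (fun a => by rw [hσ]; ring) (fun a hfa hcon => ?_)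
      (fun a => Finset.mem_univ _) (fun a => ?_)
    · have := hσ a j
      rw [hcon] at this
      rcases hpm a j with h1 | h1 <;> rw [h1] at this <;> norm_num at this
    · apply hdist
      funext j
      rw [hσ, hσ]; ring
  -- total overlap with any vector vanishes
  have htot : ∀ y : Fin V → ℝ, ∑ α, ∑ j, y j * v α j = 0 := by
    intro y
    rw [Finset.sum_comm]
    simp_rw [← Finset.mul_sum]
    simp [hcol]
  -- rewrite of the energy
  have hE : ∀ (y : Fin V → ℝ) (k : Fin H → ℝ),
      raEnergy A lam v y k
        = -2 * A * ∑ α, k α * ((∑ j, y j * v α j) + lam α - V) := by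
    intro y k
    unfold raEnergy
    rw [Finset.sum_comm]
    have h1 : ∀ α, ∑ j, y j * (2 * A * v α j) * k α
        = 2 * A * k α * ∑ j, y j * v α j := by
      intro α
      rw [Finset.mul_sum]
      exact Finset.sum_congr rfl fun j _ => by ring
    rw [Finset.sum_congr rfl fun α _ => h1 α, Finset.mul_sum,
      ← Finset.sum_neg_distrib, ← Finset.sum_sub_distrib]
    exact Finset.sum_congr rfl fun α _ => by ring
  -- abbreviations
  set g : Fin H → ℝ := fun α => (∑ j, x j * v α j) + lam α - V with hgdef
  set gp : Fin H → ℝ := fun α => (∑ j, v η j * v α j) + lam α - V with hgpdef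
  -- sum of g over α
  have esum : ∀ y : Fin V → ℝ,
      ∑ α, ((∑ j, y j * v α j) + lam α - (V : ℝ)) = ∑ α, lam α - H * V := by
    intro y
    rw [Finset.sum_sub_distrib, Finset.sum_add_distrib, htot y, Finset.sum_const,
      Finset.card_univ, Fintype.card_fin, zero_add, nsmul_eq_mul]
  have hgsum : ∑ α, g α = ∑ α, lam α - H * V := esum x
  have hgpsum : ∑ α, gp α = ∑ α, lam α - H * V := esum (v η)
  -- splitting sums against the pattern hidden vector
  have hsplit : ∀ t : Fin H → ℝ,
      ∑ α, (if α = η then (1 : ℝ) else -1) * t α = 2 * t η - ∑ α, t α := by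
    intro t
    have h2 : ∀ α, (if α = η then (1 : ℝ) else -1) * t α
        = (if α = η then 2 * t α else 0) - t α := by
      intro α; by_cases hα : α = η <;> simp [hα] <;> ring
    rw [Finset.sum_congr rfl fun α _ => h2 α, Finset.sum_sub_distrib,
      Finset.sum_ite_eq' univ η (fun α => 2 * t α)]
    simp
  -- value of gp at η
  have hgpη : gp η = lam η := by
    rw [hgpdef]
    simp only [pm_overlap_self (v η) (hpm η)]
    ring
  -- the pattern sum
  have hpat : ∑ α, (if α = η then (1 : ℝ) else -1) * gp α
      = 2 * lam η - (∑ α, lam α - H * V) := by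
    rw [hsplit gp, hgpη, hgpsum]
  -- bounds on g
  have hgle : ∀ α, x ≠ v α → g α ≤ lam α - 2 := by
    intro α hne
    have := pm_overlap_le x (v α) hx (hpm α) hne
    rw [hgdef]; simp only []; linarith
  have hgeq : ∀ α, x = v α → g α = lam α := by
    intro α hxe
    rw [hgdef]; simp only [hxe, pm_overlap_self (v α) (hpm α)]; ring
  -- decomposition of the configuration sum
  have hdecomp : ∑ α, h α * g α
      = -(∑ α, g α) + ∑ α, (if h α = 1 then 2 * g α else 0) := by
    rw [← Finset.sum_neg_distrib, ← Finset.sum_add_distrib]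
    refine Finset.sum_congr rfl fun α _ => ?_
    rcases hh α with h1 | h1
    · rw [h1, if_pos rfl]; ring
    · rw [h1, if_neg (by norm_num)]; ring
  -- the key bound T ≤ 1
  have hT : ∑ α, (if h α = 1 then 2 * g α else 0) ≤ 1 := by
    by_cases hcase : ∃ β, h β = 1 ∧ x ≠ v β
    · obtain ⟨β, hβ1, hβ2⟩ := hcase
      -- the bounding function
      set b : Fin H → ℝ := fun α => if x = v α then 2 * lam α else 0 with hbdef
      have hb0 : ∀ α, 0 ≤ b α := by
        intro α
        rw [hbdef]
        by_cases hxa : x = v α <;> simp [hxa]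
        linarith [(hlam α).1]
      have hbsum : ∑ α, b α ≤ 5 / 2 := by
        by_cases hex : ∃ μ, x = v μ
        · obtain ⟨μ, hμ⟩ := hex
          have heqb : ∀ α, b α = if α = μ then 2 * lam μ else 0 := by
            intro α
            rw [hbdef]
            by_cases hαμ : α = μ
            · simp [hαμ, hμ]
            · have : x ≠ v α := by
                intro hcon
                exact hαμ (hdist (hcon.symm.trans hμ))
              simp [this, hαμ]
          rw [Finset.sum_congr rfl fun α _ => heqb α,
            Finset.sum_ite_eq' univ μ (fun _ => 2 * lam μ)]
          simp only [Finset.mem_univ, if_true]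
          linarith [(hlam μ).2]
        · push_neg at hex
          have : ∀ α, b α = 0 := by intro α; rw [hbdef]; simp [hex α]
          rw [Finset.sum_congr rfl fun α _ => this α]
          norm_num
      have hterm : ∀ α, (if h α = 1 then 2 * g α else 0) ≤ b α := by
        intro α
        by_cases hα : h α = 1
        · by_cases hxa : x = v α
          · rw [hbdef]; simp [hα, hxa, hgeq α hxa]
          · have := hgle α hxa
            have hb := hb0 α
            simp only [hα, if_pos rfl]
            have : 2 * g α ≤ 2 * (lam α - 2) := by linarith
            calc 2 * g α ≤ 2 * (lam α - 2) := this
              _ ≤ 0 := by linarith [(hlam α).2]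
              _ ≤ b α := hb
        · simp [hα, hb0 α]
      have hsum_split : ∑ α, (if h α = 1 then 2 * g α else 0)
          = 2 * g β + ∑ α ∈ univ.erase β, (if h α = 1 then 2 * g α else 0) := by
        rw [← Finset.add_sum_erase univ _ (Finset.mem_univ β), hβ1]
        simp
      have herase : ∑ α ∈ univ.erase β, (if h α = 1 then 2 * g α else 0)
          ≤ ∑ α, b α := by
        calc ∑ α ∈ univ.erase β, (if h α = 1 then 2 * g α else 0)
            ≤ ∑ α ∈ univ.erase β, b α :=
              Finset.sum_le_sum fun α _ => hterm α
          _ ≤ ∑ α, b α :=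
              Finset.sum_le_sum_of_subset_of_nonneg (Finset.subset_univ _)
                (fun α _ _ => hb0 α)
      have hgβ := hgle β hβ2
      rw [hsum_split]
      have := (hlam β).2
      linarith
    · push_neg at hcase
      by_cases hex : ∃ μ, h μ = 1
      · obtain ⟨μ, hμ⟩ := hex
        exfalso
        apply hnotpat
        refine ⟨μ, hcase μ hμ, ?_⟩
        funext γ
        by_cases hγ : γ = μ
        · simp [hγ, hμ]
        · simp only [hγ, if_neg hγ]
          rcases hh γ with h1 | h1
          · exact absurd (hdist ((hcase γ h1).symm.trans (hcase μ hμ))) hγ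
          · exact h1
      · push_neg at hex
        have : ∀ α, (if h α = 1 then 2 * g α else 0) = 0 := by
          intro α; simp [hex α]
        rw [Finset.sum_congr rfl fun α _ => this α]
        simp
  -- put everything together
  rw [hE x h, hE (v η) (fun γ => if γ = η then (1 : ℝ) else -1)]
  have hconf : ∑ α, h α * g α ≤ -(∑ α, lam α - H * V) + 1 := by
    rw [hdecomp, hgsum]; linarith
  have hfinal : ∑ α, (if α = η then (1 : ℝ) else -1) * gp α
      - ∑ α, h α * g α > 1 / 2 := by
    rw [hpat]
    have := (hlam η).1
    linarith
  nlinarith [hfinal, hA]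
end
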